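/- arXiv:1404.2555 — 3 statements merged into one kernel-verified Lean document; each statement's English description precedes it below -/
import Mathlib

section
/- Let f : ℝ → ℝ be continuous and strictly decreasing with f(μ) → L as μ → -∞ (for some L ∈ ℝ) and f(μ) → -∞ as μ → +∞, and let q, r > 0. Then: (i) there exists exactly one μ₁ ∈ (-qr, ∞) with f(μ₁) = qμ₁/(qr + μ₁); (ii) if moreover q < L, there exists exactly one μ₂ ∈ (-∞, -qr) with f(μ₂) = qμ₂/(qr + μ₂), and one has f(μ₁) < q < f(μ₂). -/
/-!
Write `R μ = q μ / (c + μ) = q - q c / (c + μ)` with `c = q r`. On each of the half-lines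
`(-c, ∞)` and `(-∞, -c)` the function `R` is continuous and strictly increasing while `f` is
strictly decreasing, so `f - R` has at most one zero there. As `μ ↓ -c` we have `R μ → -∞`, and
as `μ → +∞` we have `R μ → q` while `f μ → -∞`, so `f - R` changes sign on `(-c, ∞)`. Likewise
`R μ → +∞` as `μ ↑ -c`, while `f - R → L - q > 0` as `μ → -∞`. Finally `R < q` on the right
half-line and `R > q` on the left one.
-/

open Filter Topology Set Bornology

theorem StrictAntiOn.existsUnique_eq_of_strictMonoOn {α β : Type*} [LinearOrder α] [Preorder β]
    {f g : α → β} {s : Set α} (hf : StrictAntiOn f s) (hg : StrictMonoOn g s)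
    (h : ∃ x ∈ s, f x = g x) : ∃! x, x ∈ s ∧ f x = g x := by
  obtain ⟨x, hx, hfx⟩ := h
  refine ⟨x, ⟨hx, hfx⟩, fun y ⟨hy, hfy⟩ => ?_⟩
  by_contra hne
  rcases lt_or_gt_of_ne hne with h | h
  · exact (hf hy hx h).not_gt (hfx ▸ hfy ▸ hg hy hx h)
  · exact (hf hx hy h).not_gt (hfx ▸ hfy ▸ hg hx hy h)

section

variable {q c : ℝ}

lemma mul_div_add_eq_sub_mul_inv (q : ℝ) {c μ : ℝ} (h : c + μ ≠ 0) :
    q * μ / (c + μ) = q - q * c * (c + μ)⁻¹ := by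
  field_simp
  ring

lemma strictMonoOn_mul_div_add_Ioi (hqc : 0 < q * c) :
    StrictMonoOn (fun μ => q * μ / (c + μ)) (Ioi (-c)) := by
  intro x hx y hy hxy
  simp only [mem_Ioi] at hx hy ⊢
  rw [mul_div_add_eq_sub_mul_inv q (by linarith), mul_div_add_eq_sub_mul_inv q (by linarith)]
  gcongr
  linarith

lemma strictMonoOn_mul_div_add_Iio (hqc : 0 < q * c) :
    StrictMonoOn (fun μ => q * μ / (c + μ)) (Iio (-c)) := by
  intro x hx y hy hxy
  simp only [mem_Iio] at hx hy ⊢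
  rw [mul_div_add_eq_sub_mul_inv q (by linarith), mul_div_add_eq_sub_mul_inv q (by linarith)]
  gcongr q - ?_
  exact mul_lt_mul_of_pos_left ((inv_lt_inv_of_neg (by linarith) (by linarith)).2 (by linarith)) hqc

lemma mul_div_add_lt (hqc : 0 < q * c) {μ : ℝ} (hμ : μ ∈ Ioi (-c)) :
    q * μ / (c + μ) < q := by
  have : 0 < c + μ := by simp only [mem_Ioi] at hμ; linarith
  rw [mul_div_add_eq_sub_mul_inv q this.ne']
  exact sub_lt_self q (mul_pos hqc (inv_pos.2 this))

lemma lt_mul_div_add (hqc : 0 < q * c) {μ : ℝ} (hμ : μ ∈ Iio (-c)) :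
    q < q * μ / (c + μ) := by
  have : c + μ < 0 := by simp only [mem_Iio] at hμ; linarith
  rw [mul_div_add_eq_sub_mul_inv q this.ne]
  linarith [mul_neg_of_pos_of_neg hqc (inv_lt_zero.2 this)]

lemma continuousOn_mul_div_add : ContinuousOn (fun μ => q * μ / (c + μ)) {μ | c + μ ≠ 0} :=
  ContinuousOn.div (by fun_prop) (by fun_prop) fun _ h => h

lemma tendsto_mul_div_add_cobounded :
    Tendsto (fun μ => q * μ / (c + μ)) (cobounded ℝ) (𝓝 q) := by
  have hinv := tendsto_inv₀_cobounded'.comp (tendsto_const_add_cobounded c)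
  have hlim : Tendsto (fun μ => q - q * c * (c + μ)⁻¹) (cobounded ℝ) (𝓝 (q - q * c * 0)) :=
    tendsto_const_nhds.sub (tendsto_const_nhds.mul (hinv.mono_right nhdsWithin_le_nhds))
  rw [mul_zero, sub_zero] at hlim
  refine hlim.congr' ?_
  filter_upwards [hinv self_mem_nhdsWithin] with μ (hμ : (c + μ)⁻¹ ≠ 0)
  exact (mul_div_add_eq_sub_mul_inv q fun h => hμ (by rw [h, inv_zero])).symm

lemma tendsto_mul_div_add_nhdsGT (hqc : 0 < q * c) :
    Tendsto (fun μ => q * μ / (c + μ)) (𝓝[>] (-c)) atBot := by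
  have hden : Tendsto (c + ·) (𝓝[>] (-c)) (𝓝[>] 0) := add_neg_cancel c ▸ map_add_left_nhdsGT.le
  have hnum : Tendsto (fun μ => q * μ) (𝓝[>] (-c)) (𝓝 (q * -c)) :=
    (continuous_const_mul q).continuousWithinAt
  simpa only [div_eq_mul_inv, Pi.inv_apply] using
    hnum.neg_mul_atTop (by linarith) hden.inv_tendsto_nhdsGT_zero

lemma tendsto_mul_div_add_nhdsLT (hqc : 0 < q * c) :
    Tendsto (fun μ => q * μ / (c + μ)) (𝓝[<] (-c)) atTop := by
  have hden : Tendsto (c + ·) (𝓝[<] (-c)) (𝓝[<] 0) := add_neg_cancel c ▸ map_add_left_nhdsLT.le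
  have hnum : Tendsto (fun μ => q * μ) (𝓝[<] (-c)) (𝓝 (q * -c)) :=
    (continuous_const_mul q).continuousWithinAt
  simpa only [div_eq_mul_inv, Pi.inv_apply] using
    hnum.neg_mul_atBot (by linarith) hden.inv_tendsto_nhdsLT_zero
theorem exists_mem_Ioi_eq_mul_div_add {f : ℝ → ℝ} (hf : Continuous f)
    (hf_top : Tendsto f atTop atBot) (hqc : 0 < q * c) :
    ∃ μ ∈ Ioi (-c), f μ = q * μ / (c + μ) := by
  set g := fun μ => f μ - q * μ / (c + μ)
  have hg : ContinuousOn g (Ioi (-c)) :=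
    hf.continuousOn.sub <| continuousOn_mul_div_add.mono fun μ (hμ : -c < μ) =>
      show c + μ ≠ 0 by linarith
  have hg_top : Tendsto g atTop atBot := by
    simpa only [g, sub_eq_add_neg] using
      hf_top.atBot_add
        (tendsto_mul_div_add_cobounded.mono_left IsOrderBornology.atTop_le_cobounded).neg
  have hg_pole : Tendsto g (𝓝[>] (-c)) atTop :=
    ((hf.tendsto _).mono_left nhdsWithin_le_nhds).add_atTop
      (tendsto_neg_atBot_atTop.comp (tendsto_mul_div_add_nhdsGT hqc))
  obtain ⟨μ, hμ, hgμ⟩ := isPreconnected_Ioi.intermediate_value_Iii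
    (le_principal_iff.2 (Ioi_mem_atTop _)) (le_principal_iff.2 self_mem_nhdsWithin) hg
    hg_top hg_pole (mem_univ 0)
  exact ⟨μ, hμ, sub_eq_zero.1 hgμ⟩

theorem exists_mem_Iio_eq_mul_div_add {f : ℝ → ℝ} (hf : Continuous f) {L : ℝ}
    (hf_bot : Tendsto f atBot (𝓝 L)) (hqL : q < L) (hqc : 0 < q * c) :
    ∃ μ ∈ Iio (-c), f μ = q * μ / (c + μ) := by
  set g := fun μ => f μ - q * μ / (c + μ)
  have hg : ContinuousOn g (Iio (-c)) :=
    hf.continuousOn.sub <| continuousOn_mul_div_add.mono fun μ (hμ : μ < -c) =>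
      show c + μ ≠ 0 by linarith
  have hg_bot : Tendsto g atBot (𝓝 (L - q)) :=
    hf_bot.sub (tendsto_mul_div_add_cobounded.mono_left IsOrderBornology.atBot_le_cobounded)
  have hg_pole : Tendsto g (𝓝[<] (-c)) atBot :=
    ((hf.tendsto _).mono_left nhdsWithin_le_nhds).add_atBot
      (tendsto_neg_atTop_atBot.comp (tendsto_mul_div_add_nhdsLT hqc))
  obtain ⟨μ, hμ, hgμ⟩ := isPreconnected_Iio.intermediate_value_Iio
    (le_principal_iff.2 self_mem_nhdsWithin) (le_principal_iff.2 (Iio_mem_atBot _)) hg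
    hg_pole hg_bot (sub_pos.2 hqL)
  exact ⟨μ, hμ, sub_eq_zero.1 hgμ⟩

end

/-- If `f : ℝ → ℝ` is continuous, strictly decreasing, `f(μ) → L` as `μ → -∞` and
`f(μ) → -∞` as `μ → +∞`, and `q, r > 0`, then (i) there is exactly one `μ₁ ∈ (-qr, ∞)` with
`f(μ₁) = qμ₁/(qr + μ₁)`; (ii) if moreover `q < L`, there is exactly one `μ₂ ∈ (-∞, -qr)`
with `f(μ₂) = qμ₂/(qr + μ₂)`, and `f(μ₁) < q < f(μ₂)`. -/
theorem stmt5 (f : ℝ → ℝ) (hcont : Continuous f) (hanti : StrictAnti f)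
    (L : ℝ) (hL : Tendsto f atBot (𝓝 L)) (hbot : Tendsto f atTop atBot)
    (q r : ℝ) (hq : 0 < q) (hr : 0 < r) :
    (∃! μ₁, μ₁ ∈ Ioi (-(q * r)) ∧ f μ₁ = q * μ₁ / (q * r + μ₁)) ∧
    (q < L →
      (∃! μ₂, μ₂ ∈ Iio (-(q * r)) ∧ f μ₂ = q * μ₂ / (q * r + μ₂)) ∧
      (∀ μ₁ μ₂, μ₁ ∈ Ioi (-(q * r)) → f μ₁ = q * μ₁ / (q * r + μ₁) →
        μ₂ ∈ Iio (-(q * r)) → f μ₂ = q * μ₂ / (q * r + μ₂) →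
        f μ₁ < q ∧ q < f μ₂)) := by
  have hqc : 0 < q * (q * r) := by positivity
  refine ⟨(hanti.strictAntiOn _).existsUnique_eq_of_strictMonoOn
    (strictMonoOn_mul_div_add_Ioi hqc) (exists_mem_Ioi_eq_mul_div_add hcont hbot hqc),
    fun hqL => ⟨(hanti.strictAntiOn _).existsUnique_eq_of_strictMonoOn
      (strictMonoOn_mul_div_add_Iio hqc) (exists_mem_Iio_eq_mul_div_add hcont hL hqL hqc), ?_⟩⟩
  intro μ₁ μ₂ hμ₁ hfμ₁ hμ₂ hfμ₂
  exact ⟨hfμ₁ ▸ mul_div_add_lt hqc hμ₁, hfμ₂ ▸ lt_mul_div_add hqc hμ₂⟩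
end

section
/- With the notation of the previous statement, assume the trace inequality: for every τ > 0 there is C_τ > 0 with ‖u‖²_{L²(Γ)} ≤ τ‖∇u‖²_{L²(Ω)} + C_τ‖u‖²_{L²(Ω)} for all u ∈ H¹₀(Ω). Then for each k, μ ↦ λ_k(μ) is locally Lipschitz continuous; more precisely, for any μ₀ ≤ μ ≤ μ̃ ≤ μ₁ and τ > 0 with τμ₁ ≤ 1/2, one has 0 ≤ λ_k(μ) - λ_k(μ̃) ≤ 2(τ λ_k(μ₀) + C_τ)(μ̃ - μ). -/
/-!
The trace inequality rearranges to `(1 - τμ̃) b[u] ≤ τ η^{μ̃}[u] + C_τ c[u]`, which gives for the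
Rayleigh quotients `R_μ = η^μ / c` the pointwise bounds `R_μ̃ ≤ R_μ ≤ (1 + τδ) R_μ̃ + C_τ δ` with
`δ = (μ̃ - μ) / (1 - τμ̃)`. Such monotone affine bounds survive the sup over each subspace and the
inf over subspaces, so `λ_k(μ) - λ_k(μ̃) ≤ δ (τ λ_k(μ̃) + C_τ)`. Finally `τμ̃ ≤ 1/2` gives
`δ ≤ 2(μ̃ - μ)`, the same rearranged trace inequality gives `τ λ_k(μ̃) + C_τ ≥ 0`, and
monotonicity gives `λ_k(μ̃) ≤ λ_k(μ₀)`.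
-/

open Module Set

namespace Real

variable {ι : Type*} {s t : ι → ℝ} {α β : ℝ}

/- `⨆` and `⨅` on `ℝ` are `0` for empty or unbounded families; the two-sided hypotheses make `s`
and `t` bounded simultaneously, and `0 ≤ β` covers the junk cases. -/

theorem iSup_le_iSup_le_mul_iSup_add (hα : 0 ≤ α) (hβ : 0 ≤ β)
    (hst : ∀ i, s i ≤ t i) (hts : ∀ i, t i ≤ α * s i + β) :
    iSup s ≤ iSup t ∧ iSup t ≤ α * iSup s + β := by
  rcases isEmpty_or_nonempty ι with hι | hι
  · simpa using hβ
  by_cases hs : BddAbove (range s)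
  · have ht : BddAbove (range t) := by
      obtain ⟨M, hM⟩ := hs
      refine ⟨α * M + β, forall_mem_range.2 fun i => (hts i).trans ?_⟩
      gcongr
      exact hM (mem_range_self i)
    refine ⟨ciSup_mono ht hst, ciSup_le fun i => (hts i).trans ?_⟩
    gcongr
    exact le_ciSup hs i
  · have ht : ¬BddAbove (range t) := fun ⟨M, hM⟩ =>
      hs ⟨M, forall_mem_range.2 fun i => (hst i).trans (hM (mem_range_self i))⟩
    rw [iSup_of_not_bddAbove hs, iSup_of_not_bddAbove ht]
    simpa using hβ

theorem iInf_le_iInf_le_mul_iInf_add (hα : 0 < α) (hβ : 0 ≤ β)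
    (hst : ∀ i, s i ≤ t i) (hts : ∀ i, t i ≤ α * s i + β) :
    iInf s ≤ iInf t ∧ iInf t ≤ α * iInf s + β := by
  rcases isEmpty_or_nonempty ι with hι | hι
  · simpa using hβ
  by_cases ht : BddBelow (range t)
  · have hs : BddBelow (range s) := by
      obtain ⟨M, hM⟩ := ht
      refine ⟨(M - β) / α, forall_mem_range.2 fun i => ?_⟩
      rw [div_le_iff₀' hα]
      linarith [hts i, hM (mem_range_self i)]
    refine ⟨ciInf_mono hs hst, ?_⟩
    rw [← sub_le_iff_le_add, ← div_le_iff₀' hα]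
    refine le_ciInf fun i => ?_
    rw [div_le_iff₀' hα, sub_le_iff_le_add]
    exact (ciInf_le ht i).trans (hts i)
  · have hs : ¬BddBelow (range s) := fun ⟨M, hM⟩ =>
      ht ⟨M, forall_mem_range.2 fun i => (hM (mem_range_self i)).trans (hst i)⟩
    rw [iInf_of_not_bddBelow hs, iInf_of_not_bddBelow ht]
    simpa using hβ

theorem le_iSup_of_forall_le {m : ℝ} (hm : m ≤ 0) (h : ∀ i, m ≤ s i) : m ≤ iSup s := by
  rcases isEmpty_or_nonempty ι with hι | hι
  · simpa using hm
  by_cases hs : BddAbove (range s)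
  · exact (h (Classical.arbitrary ι)).trans (le_ciSup hs _)
  · rwa [iSup_of_not_bddAbove hs]

end Real

section Rayleigh

variable {V : Type*} (a b c : V → ℝ)

noncomputable def rayleigh (μ : ℝ) (u : V) : ℝ := (a u - μ * b u) / c u

variable {a b c} {u : V} {τ Cτ μ ν : ℝ}

theorem rayleigh_antitone (hb : 0 ≤ b u) (hc : 0 < c u) : Antitone (rayleigh a b c · u) :=
  fun _ _ hμν => div_le_div_of_nonneg_right (by nlinarith) hc.le

theorem rayleigh_le_mul_add (hc : 0 < c u) (htrace : b u ≤ τ * a u + Cτ * c u)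
    (hμν : μ ≤ ν) (hτν : τ * ν < 1) :
    rayleigh a b c μ u ≤
      (1 + τ * ((ν - μ) / (1 - τ * ν))) * rayleigh a b c ν u + Cτ * ((ν - μ) / (1 - τ * ν)) := by
  set δ := (ν - μ) / (1 - τ * ν)
  have hδ : 0 ≤ δ := div_nonneg (by linarith) (by linarith)
  have hδν : δ * (1 - τ * ν) = ν - μ := div_mul_cancel₀ _ (by linarith)
  have hshift : (ν - μ) * b u ≤ δ * (τ * (a u - ν * b u) + Cτ * c u) := by
    rw [← hδν, mul_assoc]
    exact mul_le_mul_of_nonneg_left (by linarith) hδ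
  unfold rayleigh
  rw [mul_div_assoc', div_add' _ _ _ hc.ne', div_le_div_iff_of_pos_right hc]
  linarith

theorem neg_div_le_rayleigh (hb : 0 ≤ b u) (hc : 0 < c u) (htrace : b u ≤ τ * a u + Cτ * c u)
    (hτ : 0 < τ) (hτν : τ * ν ≤ 1) : -(Cτ / τ) ≤ rayleigh a b c ν u := by
  have : 0 ≤ τ * (a u - ν * b u) + Cτ * c u := by nlinarith
  unfold rayleigh
  rw [neg_le_iff_add_nonneg', div_add_div _ _ hτ.ne' hc.ne']
  exact div_nonneg (by linarith) (by positivity)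

end Rayleigh

section Minmax

variable {V : Type*} [AddCommGroup V] [Module ℝ V]

noncomputable def minmaxEigenvalue (a b c : V → ℝ) (k : ℕ) (μ : ℝ) : ℝ :=
  ⨅ L : {L : Submodule ℝ V // finrank ℝ L = k},
    ⨆ u : {u : V // u ∈ L.1 ∧ u ≠ 0}, rayleigh a b c μ u.1

variable {a b c : V → ℝ} {k : ℕ} {τ Cτ μ ν : ℝ}

theorem minmaxEigenvalue_le_le_mul_add (hb : ∀ u, 0 ≤ b u) (hc : ∀ u, u ≠ 0 → 0 < c u)
    (htrace : ∀ u, b u ≤ τ * a u + Cτ * c u) (hτ : 0 ≤ τ) (hCτ : 0 ≤ Cτ)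
    (hμν : μ ≤ ν) (hτν : τ * ν < 1) :
    minmaxEigenvalue a b c k ν ≤ minmaxEigenvalue a b c k μ ∧
      minmaxEigenvalue a b c k μ ≤ (1 + τ * ((ν - μ) / (1 - τ * ν))) *
        minmaxEigenvalue a b c k ν + Cτ * ((ν - μ) / (1 - τ * ν)) := by
  have hδ : 0 ≤ (ν - μ) / (1 - τ * ν) := div_nonneg (by linarith) (by linarith)
  have hsup (L : {L : Submodule ℝ V // finrank ℝ L = k}) :=
    Real.iSup_le_iSup_le_mul_iSup_add (by positivity) (by positivity)
      (fun u : {u : V // u ∈ L.1 ∧ u ≠ 0} => rayleigh_antitone (hb u) (hc u u.2.2) hμν)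
      (fun u => rayleigh_le_mul_add (hc u u.2.2) (htrace u) hμν hτν)
  exact Real.iInf_le_iInf_le_mul_iInf_add (by positivity) (by positivity)
    (fun L => (hsup L).1) (fun L => (hsup L).2)

theorem neg_div_le_minmaxEigenvalue (hb : ∀ u, 0 ≤ b u) (hc : ∀ u, u ≠ 0 → 0 < c u)
    (htrace : ∀ u, b u ≤ τ * a u + Cτ * c u) (hτ : 0 < τ) (hCτ : 0 ≤ Cτ) (hτν : τ * ν ≤ 1) :
    -(Cτ / τ) ≤ minmaxEigenvalue a b c k ν := by
  have hm : -(Cτ / τ) ≤ 0 := neg_nonpos.2 (by positivity)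
  exact Real.le_iInf (fun L => Real.le_iSup_of_forall_le hm fun u =>
    neg_div_le_rayleigh (hb u) (hc u u.2.2) (htrace u) hτ hτν) hm

end Minmax

/-- Local Lipschitz continuity of the min-max eigenvalue curves `μ ↦ λ_k(μ)` of
`η^μ[u] = a[u] - μ b[u]` relative to `c[u]` on `V = H¹₀(Ω)`, under the trace inequality
`b[u] ≤ τ a[u] + C_τ c[u]`: for `μ₀ ≤ μ ≤ μ̃ ≤ μ₁` and `τ > 0` with `τ μ₁ ≤ 1/2`,
`0 ≤ λ_k(μ) - λ_k(μ̃) ≤ 2(τ λ_k(μ₀) + C_τ)(μ̃ - μ)`. -/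
theorem stmt9 {V : Type*} [AddCommGroup V] [Module ℝ V]
    (a b c : QuadraticForm ℝ V)
    (hb : ∀ u, 0 ≤ b u) (hc : ∀ u, u ≠ 0 → 0 < c u)
    (k : ℕ) (lam : ℝ → ℝ)
    (hlam : ∀ μ, lam μ =
      ⨅ L : {L : Submodule ℝ V // finrank ℝ L = k},
        ⨆ u : {u : V // u ∈ L.1 ∧ u ≠ 0}, (a u.1 - μ * b u.1) / c u.1)
    (τ Cτ : ℝ) (hτ : 0 < τ) (hCτ : 0 < Cτ)
    (htrace : ∀ u, b u ≤ τ * a u + Cτ * c u)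
    (μ₀ μ μt μ₁ : ℝ) (h₀ : μ₀ ≤ μ) (hμ : μ ≤ μt) (h₁ : μt ≤ μ₁)
    (hτμ₁ : τ * μ₁ ≤ 1 / 2) :
    0 ≤ lam μ - lam μt ∧ lam μ - lam μt ≤ 2 * (τ * lam μ₀ + Cτ) * (μt - μ) := by
  obtain rfl : lam = minmaxEigenvalue a b c k := funext hlam
  have hτμt : τ * μt ≤ 1 / 2 := (mul_le_mul_of_nonneg_left h₁ hτ.le).trans hτμ₁
  obtain ⟨hanti, hlip⟩ := minmaxEigenvalue_le_le_mul_add (k := k) hb hc htrace hτ.le hCτ.le hμ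
    (by linarith)
  obtain ⟨hanti₀, -⟩ := minmaxEigenvalue_le_le_mul_add (k := k) hb hc htrace hτ.le hCτ.le h₀
    (by nlinarith)
  have hlow := neg_div_le_minmaxEigenvalue (k := k) (ν := μt) hb hc htrace hτ hCτ.le (by linarith)
  set δ := (μt - μ) / (1 - τ * μt)
  have hδ : δ ≤ 2 * (μt - μ) := by
    rw [div_le_iff₀ (by linarith)]
    nlinarith
  have hpos : 0 ≤ τ * minmaxEigenvalue a b c k μt + Cτ := by
    have := mul_le_mul_of_nonneg_left hlow hτ.le
    rw [mul_neg, mul_div_cancel₀ _ hτ.ne'] at this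
    linarith
  refine ⟨by linarith, ?_⟩
  calc _ ≤ δ * (τ * minmaxEigenvalue a b c k μt + Cτ) := by linarith
    _ ≤ 2 * (μt - μ) * (τ * minmaxEigenvalue a b c k μt + Cτ) := by gcongr
    _ ≤ 2 * (μt - μ) * (τ * minmaxEigenvalue a b c k μ₀ + Cτ) := by gcongr; linarith
    _ = 2 * (τ * minmaxEigenvalue a b c k μ₀ + Cτ) * (μt - μ) := by ring
end

section
/- Let q ∈ (0,∞), r > 0, λ ≠ q, and let (u₁, u₂) ∈ H¹₀(Ω) ⊕ L²(Γ) satisfy, for all (v₁, v₂) ∈ H¹₀(Ω) ⊕ L²(Γ): ∫_Ω ∇u₁·∇v̄₁ dx + qr ∫_Γ (u₁ - u₂)(v̄₁ - v̄₂) ds = λ(∫_Ω u₁ v̄₁ dx + r ∫_Γ u₂ v̄₂ ds). Then u₂ = q u₁|_Γ/(q - λ), and u₁ satisfies ∫_Ω ∇u₁·∇v̄₁ dx - (λqr/(q-λ)) ∫_Γ u₁ v̄₁ ds = λ ∫_Ω u₁ v̄₁ dx for all v₁ ∈ H¹₀(Ω). Conversely, if u₂ = q u₁|_Γ/(q - λ)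 and the second identity holds, then the first identity holds. -/
open scoped InnerProductSpace

/-
Subtracting the right-hand side, the weak identity reads `a(v₁) + b(v₂) = 0` with `a` depending
only on `v₁` and `b(v₂) = r ⟪(q - λ) u₂ - q T u₁, v₂⟫`, and both vanish at `0`. So it holds for all
pairs iff `a ≡ 0` and `b ≡ 0`. Since `r ≠ 0`, `b ≡ 0` says `(q - λ) u₂ = q T u₁`, i.e.
`u₂ = q/(q - λ) T u₁` as `q ≠ λ`; substituting this into `a` turns the coupling term
`q r ⟪T u₁ - u₂, T v₁⟫` into `-(λ q r/(q - λ)) ⟪T u₁, T v₁⟫`.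
-/

theorem forall_add_eq_zero_iff {A B M : Type*} [Zero A] [Zero B] [AddZeroClass M]
    {f : A → M} {g : B → M} (hf : f 0 = 0) (hg : g 0 = 0) :
    (∀ a b, f a + g b = 0) ↔ (∀ a, f a = 0) ∧ ∀ b, g b = 0 := by
  refine ⟨fun h => ⟨fun a => ?_, fun b => ?_⟩, fun h a b => by rw [h.1, h.2, add_zero]⟩
  · simpa [hg] using h a 0
  · simpa [hf] using h 0 b

section

variable {H : Type*} [NormedAddCommGroup H] [InnerProductSpace ℝ H]

theorem forall_mul_inner_sub_eq_zero_iff {r : ℝ} (hr : r ≠ 0) {x y : H} :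
    (∀ v, r * (⟪x, v⟫_ℝ - ⟪y, v⟫_ℝ) = 0) ↔ x = y := by
  simp only [mul_eq_zero, hr, false_or, sub_eq_zero]
  exact ⟨ext_inner_right ℝ, fun h v => h ▸ rfl⟩

theorem sub_smul_eq_smul_iff {q lam : ℝ} (hlam : lam ≠ q) {x y : H} :
    (q - lam) • y = q • x ↔ y = (q / (q - lam)) • x := by
  have hql : q - lam ≠ 0 := sub_ne_zero.mpr hlam.symm
  rw [← eq_inv_smul_iff₀ hql, smul_smul, inv_mul_eq_div]

end

section

variable {V₀ W H₁ H₂ : Type*}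
    [NormedAddCommGroup V₀] [InnerProductSpace ℝ V₀]
    [NormedAddCommGroup W] [InnerProductSpace ℝ W]
    [NormedAddCommGroup H₁] [InnerProductSpace ℝ H₁]
    [NormedAddCommGroup H₂] [InnerProductSpace ℝ H₂]
    {ι : V₀ →L[ℝ] H₁} {G : V₀ →L[ℝ] W} {T : V₀ →L[ℝ] H₂} {q r lam : ℝ} {u₁ : V₀} {u₂ : H₂}

theorem weak_identity_sub_eq (v₁ : V₀) (v₂ : H₂) :
    ⟪G u₁, G v₁⟫_ℝ + q * r * ⟪T u₁ - u₂, T v₁ - v₂⟫_ℝ - lam * (⟪ι u₁, ι v₁⟫_ℝ + r * ⟪u₂, v₂⟫_ℝ)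
      = (⟪G u₁, G v₁⟫_ℝ + q * r * ⟪T u₁ - u₂, T v₁⟫_ℝ - lam * ⟪ι u₁, ι v₁⟫_ℝ)
        + r * (⟪(q - lam) • u₂, v₂⟫_ℝ - ⟪q • T u₁, v₂⟫_ℝ) := by
  simp only [inner_sub_left, inner_sub_right, real_inner_smul_left]
  ring

theorem weak_identity_iff (hr : r ≠ 0) :
    (∀ (v₁ : V₀) (v₂ : H₂),
        ⟪G u₁, G v₁⟫_ℝ + q * r * ⟪T u₁ - u₂, T v₁ - v₂⟫_ℝ
          = lam * (⟪ι u₁, ι v₁⟫_ℝ + r * ⟪u₂, v₂⟫_ℝ)) ↔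
      (q - lam) • u₂ = q • T u₁ ∧
        ∀ v₁ : V₀, ⟪G u₁, G v₁⟫_ℝ + q * r * ⟪T u₁ - u₂, T v₁⟫_ℝ = lam * ⟪ι u₁, ι v₁⟫_ℝ := by
  simp only [← sub_eq_zero (b := lam * (_ + _)), weak_identity_sub_eq]
  rw [forall_add_eq_zero_iff (by simp) (by simp), forall_mul_inner_sub_eq_zero_iff hr, and_comm]
  simp only [sub_eq_zero]

theorem coupling_term_eq_of_eq_smul (hlam : lam ≠ q) (hu₂ : u₂ = (q / (q - lam)) • T u₁)
    (v₁ : V₀) :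
    q * r * ⟪T u₁ - u₂, T v₁⟫_ℝ = -(lam * q * r / (q - lam)) * ⟪T u₁, T v₁⟫_ℝ := by
  have hql : q - lam ≠ 0 := sub_ne_zero.mpr hlam.symm
  rw [hu₂, inner_sub_left, real_inner_smul_left]
  field_simp
  ring

end

theorem stmt13_general {V₀ W H₁ H₂ : Type*}
    [NormedAddCommGroup V₀] [InnerProductSpace ℝ V₀]
    [NormedAddCommGroup W] [InnerProductSpace ℝ W]
    [NormedAddCommGroup H₁] [InnerProductSpace ℝ H₁]
    [NormedAddCommGroup H₂] [InnerProductSpace ℝ H₂]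
    (ι : V₀ →L[ℝ] H₁) (G : V₀ →L[ℝ] W) (T : V₀ →L[ℝ] H₂)
    (q r lam : ℝ) (hr : 0 < r) (hlam : lam ≠ q)
    (u₁ : V₀) (u₂ : H₂) :
    (∀ (v₁ : V₀) (v₂ : H₂),
        ⟪G u₁, G v₁⟫_ℝ + q * r * ⟪T u₁ - u₂, T v₁ - v₂⟫_ℝ
          = lam * (⟪ι u₁, ι v₁⟫_ℝ + r * ⟪u₂, v₂⟫_ℝ)) ↔
      (u₂ = (q / (q - lam)) • T u₁ ∧
        ∀ v₁ : V₀,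
          ⟪G u₁, G v₁⟫_ℝ - (lam * q * r / (q - lam)) * ⟪T u₁, T v₁⟫_ℝ
            = lam * ⟪ι u₁, ι v₁⟫_ℝ) := by
  rw [weak_identity_iff hr.ne', sub_smul_eq_smul_iff hlam]
  refine and_congr_right fun hu₂ => forall_congr' fun v₁ => ?_
  rw [coupling_term_eq_of_eq_smul hlam hu₂, neg_mul, ← sub_eq_add_neg]

/-- Reduction of the eigenvalue equation for the limit operator `A_{q,r}` to a `λ`-nonlinear
problem for `u₁` alone: for `q > 0`, `r > 0`, `λ ≠ q`, a pair `(u₁, u₂) ∈ H¹₀(Ω) ⊕ L²(Γ)`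
satisfies the weak eigenvalue identity iff `u₂ = q u₁|_Γ/(q-λ)` and `u₁` satisfies
`∫_Ω ∇u₁·∇v₁ - (λqr/(q-λ)) ∫_Γ u₁ v₁ = λ ∫_Ω u₁ v₁` for all `v₁ ∈ H¹₀(Ω)`. Abstractly,
`V₀ = H¹₀(Ω)` embeds by `ι` into `H₁ = L²(Ω)`, `G` is the gradient (into `W`), `T` the trace
into `H₂ = L²(Γ)`. -/
theorem stmt13 {V₀ W H₁ H₂ : Type*}
    [NormedAddCommGroup V₀] [InnerProductSpace ℝ V₀]
    [NormedAddCommGroup W] [InnerProductSpace ℝ W]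
    [NormedAddCommGroup H₁] [InnerProductSpace ℝ H₁]
    [NormedAddCommGroup H₂] [InnerProductSpace ℝ H₂]
    (ι : V₀ →L[ℝ] H₁) (G : V₀ →L[ℝ] W) (T : V₀ →L[ℝ] H₂)
    (q r lam : ℝ) (hq : 0 < q) (hr : 0 < r) (hlam : lam ≠ q)
    (u₁ : V₀) (u₂ : H₂) :
    (∀ (v₁ : V₀) (v₂ : H₂),
        ⟪G u₁, G v₁⟫_ℝ + q * r * ⟪T u₁ - u₂, T v₁ - v₂⟫_ℝ
          = lam * (⟪ι u₁, ι v₁⟫_ℝ + r * ⟪u₂, v₂⟫_ℝ)) ↔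
      (u₂ = (q / (q - lam)) • T u₁ ∧
        ∀ v₁ : V₀,
          ⟪G u₁, G v₁⟫_ℝ - (lam * q * r / (q - lam)) * ⟪T u₁, T v₁⟫_ℝ
            = lam * ⟪ι u₁, ι v₁⟫_ℝ) :=
  stmt13_general ι G T q r lam hr hlam u₁ u₂
end
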